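/- For integers k, l, m ≥ 2 with 1/k + 1/l + 1/m < 1 and real entries, the 3×3 symmetric matrix with diagonal 1 and off-diagonal entries −cos(π/k), −cos(π/l), −cos(π/m) has negative determinant. -/
import Mathlib
set_option maxHeartbeats 1000000


open Real in
/-- The Gram matrix of a Lannér triangle diagram with labels `k, l, m`
(satisfying `1/k + 1/l + 1/m < 1`) has negative determinant. -/
theorem stmt_18 (k l m : ℕ) (hk : 2 ≤ k) (hl : 2 ≤ l) (hm : 2 ≤ m)
    (h : (1 : ℝ) / k + 1 / l + 1 / m < 1) :
    (Matrix.det !![(1 : ℝ), -cos (π / m), -cos (π / k);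
                   -cos (π / m), 1, -cos (π / l);
                   -cos (π / k), -cos (π / l), 1]) < 0 := by
  have hπ := Real.pi_pos
  set α := π / k with hαdef
  set β := π / l with hβdef
  set γ := π / m with hγdef
  have hk' : (2 : ℝ) ≤ k := by exact_mod_cast hk
  have hl' : (2 : ℝ) ≤ l := by exact_mod_cast hl
  have hm' : (2 : ℝ) ≤ m := by exact_mod_cast hm
  have hkp : (0 : ℝ) < k := by linarith
  have hlp : (0 : ℝ) < l := by linarith
  have hmp : (0 : ℝ) < m := by linarith
  have hα0 : 0 < α := div_pos hπ hkp
  have hβ0 : 0 < β := div_pos hπ hlp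
  have hγ0 : 0 < γ := div_pos hπ hmp
  have hα2 : α ≤ π / 2 := by
    rw [hαdef, div_le_div_iff₀ hkp two_pos]; nlinarith
  have hβ2 : β ≤ π / 2 := by
    rw [hβdef, div_le_div_iff₀ hlp two_pos]; nlinarith
  have hγ2 : γ ≤ π / 2 := by
    rw [hγdef, div_le_div_iff₀ hmp two_pos]; nlinarith
  have hsum : α + β + γ < π := by
    have : α + β + γ = π * ((1:ℝ)/k + 1/l + 1/m) := by
      simp only [hαdef, hβdef, hγdef]; ring
    rw [this]
    nlinarith
  -- cos γ > -cos(α+β)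
  have hc1 : cos (π - (α + β)) < cos γ := by
    apply Real.cos_lt_cos_of_nonneg_of_le_pi hγ0.le
    · linarith
    · linarith
  rw [Real.cos_pi_sub] at hc1
  have h1 : 0 < cos γ + cos (α + β) := by linarith
  have hcγ : 0 ≤ cos γ := Real.cos_nonneg_of_mem_Icc ⟨by linarith, hγ2⟩
  have hcab : 0 < cos (α - β) :=
    Real.cos_pos_of_mem_Ioo ⟨by linarith, by linarith⟩
  have h2 : 0 < cos γ + cos (α - β) := by linarith
  rw [Real.cos_add] at h1
  rw [Real.cos_sub] at h2
  have key := mul_pos h1 h2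
  have sa := Real.sin_sq_add_cos_sq α
  have sb := Real.sin_sq_add_cos_sq β
  simp [Matrix.det_fin_three]
  nlinarith [key, sa, sb]
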